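/- Let R be a commutative ring with unity, I an ideal of R, and let φ, φ* be invertible skew-symmetric matrices of size 2n over R such that φ = (1 ⊥ ε)^t φ* (1 ⊥ ε) for some ε in the relative elementary group E_{2n−1}(R,I). Then ESp_φ(R,I) = (1 ⊥ ε)^{−1} ESp_{φ*}(R,I) (1 ⊥ ε). -/

import Mathlib

/- Common definitions: symplectic groups with respect to an invertible
   skew-symmetric (alternating) matrix, elementary symplectic groups,
   Pfaffian, standard symplectic matrix, elementary linear groups. -/

namespace PaperESp

open Matrix

variable {R : Type*} [CommRing R]

/-- The Pfaffian of a `2n × 2n` matrix, as the sum over perfect matchings. -/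
def pf {n : ℕ} (A : Matrix (Fin (2*n)) (Fin (2*n)) R) : R :=
  ∑ σ ∈ Finset.univ.filter (fun σ : Equiv.Perm (Fin (2*n)) =>
      (∀ k : Fin n, (σ ⟨2*k.1, by have := k.2; omega⟩).1 < (σ ⟨2*k.1+1, by have := k.2; omega⟩).1) ∧
      (∀ k l : Fin n, k < l →
        (σ ⟨2*k.1, by have := k.2; omega⟩).1 < (σ ⟨2*l.1, by have := l.2; omega⟩).1)),
    ((Equiv.Perm.sign σ : ℤ) : R) *
      ∏ k : Fin n, A (σ ⟨2*k.1, by have := k.2; omega⟩) (σ ⟨2*k.1+1, by have := k.2; omega⟩)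

/-- `φ = [[0, -cᵀ],[c, ν]]`: the column `c`. -/
def cvec {n : ℕ} (φ : Matrix (Fin (2*n)) (Fin (2*n)) R) : Fin (2*n-1) → R :=
  fun i => φ ⟨i.1+1, by have := i.2; omega⟩ ⟨0, by have := i.2; omega⟩

/-- `φ = [[0, -cᵀ],[c, ν]]`: the block `ν`. -/
def nuMat {n : ℕ} (φ : Matrix (Fin (2*n)) (Fin (2*n)) R) :
    Matrix (Fin (2*n-1)) (Fin (2*n-1)) R :=
  Matrix.of fun i j => φ ⟨i.1+1, by have := i.2; omega⟩ ⟨j.1+1, by have := j.2; omega⟩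

/-- `φ⁻¹ = [[0, dᵀ],[-d, μ]]`: the row `d`. -/
noncomputable def dvec {n : ℕ} (φ : Matrix (Fin (2*n)) (Fin (2*n)) R) : Fin (2*n-1) → R :=
  fun i => φ⁻¹ ⟨0, by have := i.2; omega⟩ ⟨i.1+1, by have := i.2; omega⟩

/-- `φ⁻¹ = [[0, dᵀ],[-d, μ]]`: the block `μ`. -/
noncomputable def muMat {n : ℕ} (φ : Matrix (Fin (2*n)) (Fin (2*n)) R) :
    Matrix (Fin (2*n-1)) (Fin (2*n-1)) R :=
  Matrix.of fun i j => φ⁻¹ ⟨i.1+1, by have := i.2; omega⟩ ⟨j.1+1, by have := j.2; omega⟩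

/-- Vaserstein's matrix `α_φ(v) = I + d vᵀ ν`. -/
noncomputable def alphaMat {n : ℕ} (φ : Matrix (Fin (2*n)) (Fin (2*n)) R) (v : Fin (2*n-1) → R) :
    Matrix (Fin (2*n-1)) (Fin (2*n-1)) R :=
  1 + Matrix.of fun i j => dvec φ i * ∑ k, v k * nuMat φ k j

/-- Vaserstein's matrix `β_φ(v) = I + μ v cᵀ`. -/
noncomputable def betaMat {n : ℕ} (φ : Matrix (Fin (2*n)) (Fin (2*n)) R) (v : Fin (2*n-1) → R) :
    Matrix (Fin (2*n-1)) (Fin (2*n-1)) R :=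
  1 + Matrix.of fun i j => (∑ k, muMat φ i k * v k) * cvec φ j

/-- The generator `C_φ(v) = [[1, 0],[v, α_φ(v)]]`. -/
noncomputable def Cmat {n : ℕ} (φ : Matrix (Fin (2*n)) (Fin (2*n)) R) (v : Fin (2*n-1) → R) :
    Matrix (Fin (2*n)) (Fin (2*n)) R :=
  Matrix.of fun i j =>
    if hi : i.1 = 0 then (if j.1 = 0 then (1:R) else 0)
    else if hj : j.1 = 0 then v ⟨i.1-1, by have := i.2; omega⟩
    else alphaMat φ v ⟨i.1-1, by have := i.2; omega⟩ ⟨j.1-1, by have := j.2; omega⟩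

/-- The generator `R_φ(v) = [[1, vᵀ],[0, β_φ(v)]]`. -/
noncomputable def Rmat {n : ℕ} (φ : Matrix (Fin (2*n)) (Fin (2*n)) R) (v : Fin (2*n-1) → R) :
    Matrix (Fin (2*n)) (Fin (2*n)) R :=
  Matrix.of fun i j =>
    if hi : i.1 = 0 then (if hj : j.1 = 0 then (1:R) else v ⟨j.1-1, by have := j.2; omega⟩)
    else if hj : j.1 = 0 then 0
    else betaMat φ v ⟨i.1-1, by have := i.2; omega⟩ ⟨j.1-1, by have := j.2; omega⟩

/-- The symplectic group `Sp_φ(R) = {α ∈ GL_m(R) | αᵀ φ α = φ}`, as a subgroup of the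
    units of the matrix ring. -/
def Sp {m : ℕ} (φ : Matrix (Fin m) (Fin m) R) : Subgroup (Matrix (Fin m) (Fin m) R)ˣ where
  carrier := {g | (↑g : Matrix (Fin m) (Fin m) R)ᵀ * φ * (↑g : Matrix (Fin m) (Fin m) R) = φ}
  one_mem' := by simp
  mul_mem' := by
    intro a b ha hb
    simp only [Set.mem_setOf_eq, Units.val_mul] at *
    have h : ((↑a : Matrix (Fin m) (Fin m) R) * (↑b : Matrix (Fin m) (Fin m) R))ᵀ * φ *
          ((↑a : Matrix (Fin m) (Fin m) R) * (↑b : Matrix (Fin m) (Fin m) R))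
        = (↑b : Matrix (Fin m) (Fin m) R)ᵀ *
            ((↑a : Matrix (Fin m) (Fin m) R)ᵀ * φ * (↑a : Matrix (Fin m) (Fin m) R)) *
            (↑b : Matrix (Fin m) (Fin m) R) := by
      simp only [Matrix.transpose_mul, Matrix.mul_assoc]
    rw [h, ha, hb]
  inv_mem' := by
    intro a ha
    simp only [Set.mem_setOf_eq] at *
    have h : (↑a⁻¹ : Matrix (Fin m) (Fin m) R)ᵀ * φ * (↑a⁻¹ : Matrix (Fin m) (Fin m) R)
        = (↑a⁻¹ : Matrix (Fin m) (Fin m) R)ᵀ *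
            ((↑a : Matrix (Fin m) (Fin m) R)ᵀ * φ * (↑a : Matrix (Fin m) (Fin m) R)) *
            (↑a⁻¹ : Matrix (Fin m) (Fin m) R) := by
      rw [ha]
    rw [h]
    have h2 : (↑a⁻¹ : Matrix (Fin m) (Fin m) R)ᵀ *
          ((↑a : Matrix (Fin m) (Fin m) R)ᵀ * φ * (↑a : Matrix (Fin m) (Fin m) R)) *
          (↑a⁻¹ : Matrix (Fin m) (Fin m) R)
        = ((↑a : Matrix (Fin m) (Fin m) R) * (↑a⁻¹ : Matrix (Fin m) (Fin m) R))ᵀ * φ *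
          ((↑a : Matrix (Fin m) (Fin m) R) * (↑a⁻¹ : Matrix (Fin m) (Fin m) R)) := by
      simp only [Matrix.transpose_mul, Matrix.mul_assoc]
    rw [h2, Units.mul_inv]
    simp

/-- The elementary symplectic group `ESp_φ(R)` with respect to `φ`, generated by the
    `C_φ(v)` and `R_φ(v)`. -/
def Esp {n : ℕ} (φ : Matrix (Fin (2*n)) (Fin (2*n)) R) :
    Subgroup (Matrix (Fin (2*n)) (Fin (2*n)) R)ˣ :=
  Subgroup.closure {g | ∃ v : Fin (2*n-1) → R,
    (↑g : Matrix (Fin (2*n)) (Fin (2*n)) R) = Cmat φ v ∨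
    (↑g : Matrix (Fin (2*n)) (Fin (2*n)) R) = Rmat φ v}

/-- `ESp_φ(I)`, generated by the `C_φ(v)`, `R_φ(v)` with `v ∈ I^{2n-1}`. -/
def EspIdeal {n : ℕ} (φ : Matrix (Fin (2*n)) (Fin (2*n)) R) (I : Ideal R) :
    Subgroup (Matrix (Fin (2*n)) (Fin (2*n)) R)ˣ :=
  Subgroup.closure {g | ∃ v : Fin (2*n-1) → R, (∀ i, v i ∈ I) ∧
    ((↑g : Matrix (Fin (2*n)) (Fin (2*n)) R) = Cmat φ v ∨
     (↑g : Matrix (Fin (2*n)) (Fin (2*n)) R) = Rmat φ v)}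

/-- The relative elementary symplectic group `ESp_φ(R,I)`: the normal closure of
    `ESp_φ(I)` in `ESp_φ(R)`. -/
def REsp {n : ℕ} (φ : Matrix (Fin (2*n)) (Fin (2*n)) R) (I : Ideal R) :
    Subgroup (Matrix (Fin (2*n)) (Fin (2*n)) R)ˣ :=
  Subgroup.closure {g | ∃ e ∈ Esp φ, ∃ x ∈ EspIdeal φ I, g = e * x * e⁻¹}

/-- The standard skew-symmetric matrix `ψ_n = Σ (e_{2i-1,2i} - e_{2i,2i-1})` (1-based). -/
def psi (R : Type*) [CommRing R] (n : ℕ) : Matrix (Fin (2*n)) (Fin (2*n)) R :=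
  Matrix.of fun i j =>
    if i.1 + 1 = j.1 ∧ j.1 % 2 = 1 then (1:R)
    else if j.1 + 1 = i.1 ∧ i.1 % 2 = 1 then -1
    else 0

/-- The permutation `σ` of `{1,…,2n}` with `σ(2i-1) = 2i`, `σ(2i) = 2i-1` (0-based swap of
    `2i ↔ 2i+1`). -/
def sigmaFn (n : ℕ) (i : Fin (2*n)) : Fin (2*n) :=
  if h : i.1 % 2 = 0 then ⟨i.1+1, by have := i.2; omega⟩ else ⟨i.1-1, by have := i.2; omega⟩

/-- The elementary symplectic generators `se_{ij}(a)`. -/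
def seMat {R : Type*} [CommRing R] (n : ℕ) (i j : Fin (2*n)) (a : R) :
    Matrix (Fin (2*n)) (Fin (2*n)) R :=
  if i = sigmaFn n j then 1 + Matrix.single i j a
  else 1 + Matrix.single i j a
         - Matrix.single (sigmaFn n j) (sigmaFn n i) ((-1:R)^(i.1+j.1) * a)

/-- The elementary symplectic group `ESp_{2n}(R)`. -/
def Esp2n (R : Type*) [CommRing R] (n : ℕ) : Subgroup (Matrix (Fin (2*n)) (Fin (2*n)) R)ˣ :=
  Subgroup.closure {g | ∃ i j : Fin (2*n), ∃ a : R, i ≠ j ∧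
    (↑g : Matrix (Fin (2*n)) (Fin (2*n)) R) = seMat n i j a}

/-- `ESp_{2n}(I)`. -/
def Esp2nIdeal (R : Type*) [CommRing R] (n : ℕ) (I : Ideal R) :
    Subgroup (Matrix (Fin (2*n)) (Fin (2*n)) R)ˣ :=
  Subgroup.closure {g | ∃ i j : Fin (2*n), ∃ x : R, i ≠ j ∧ x ∈ I ∧
    (↑g : Matrix (Fin (2*n)) (Fin (2*n)) R) = seMat n i j x}

/-- The relative elementary symplectic group `ESp_{2n}(R,I)`: the normal closure of
    `ESp_{2n}(I)` in `ESp_{2n}(R)`. -/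
def REsp2n (R : Type*) [CommRing R] (n : ℕ) (I : Ideal R) :
    Subgroup (Matrix (Fin (2*n)) (Fin (2*n)) R)ˣ :=
  Subgroup.closure {g | ∃ e ∈ Esp2n R n, ∃ x ∈ Esp2nIdeal R n I, g = e * x * e⁻¹}

/-- The elementary linear group `E_m(R)`. -/
def Egrp (R : Type*) [CommRing R] (m : ℕ) : Subgroup (Matrix (Fin m) (Fin m) R)ˣ :=
  Subgroup.closure {g | ∃ i j : Fin m, ∃ a : R, i ≠ j ∧
    (↑g : Matrix (Fin m) (Fin m) R) = 1 + Matrix.single i j a}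

/-- `E_m(I)`. -/
def EgrpIdeal (R : Type*) [CommRing R] (m : ℕ) (I : Ideal R) :
    Subgroup (Matrix (Fin m) (Fin m) R)ˣ :=
  Subgroup.closure {g | ∃ i j : Fin m, ∃ x : R, i ≠ j ∧ x ∈ I ∧
    (↑g : Matrix (Fin m) (Fin m) R) = 1 + Matrix.single i j x}

/-- The relative elementary linear group `E_m(R,I)`: the normal closure of `E_m(I)`
    in `E_m(R)`. -/
def REgrp (R : Type*) [CommRing R] (m : ℕ) (I : Ideal R) :
    Subgroup (Matrix (Fin m) (Fin m) R)ˣ :=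
  Subgroup.closure {g | ∃ e ∈ Egrp R m, ∃ x ∈ EgrpIdeal R m I, g = e * x * e⁻¹}

/-- `1 ⊥ β`: the block diagonal matrix `diag(1, β)` of size `2n`. -/
def onePerp {n : ℕ} (β : Matrix (Fin (2*n-1)) (Fin (2*n-1)) R) :
    Matrix (Fin (2*n)) (Fin (2*n)) R :=
  Matrix.of fun i j =>
    if hi : i.1 = 0 then (if j.1 = 0 then (1:R) else 0)
    else if hj : j.1 = 0 then 0
    else β ⟨i.1-1, by have := i.2; omega⟩ ⟨j.1-1, by have := j.2; omega⟩

/-- The congruence kernel: invertible matrices reducing to the identity modulo `I`. -/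
def congrKer (R : Type*) [CommRing R] (m : ℕ) (I : Ideal R) :
    Subgroup (Matrix (Fin m) (Fin m) R)ˣ :=
  (Units.map ((Ideal.Quotient.mk I).mapMatrix.toMonoidHom :
      Matrix (Fin m) (Fin m) R →* Matrix (Fin m) (Fin m) (R ⧸ I))).ker

/-- `Sp_φ(R,I)`: the kernel of the reduction map `Sp_φ(R) → Sp_φ(R/I)`. -/
def SpRel {m : ℕ} (φ : Matrix (Fin m) (Fin m) R) (I : Ideal R) :
    Subgroup (Matrix (Fin m) (Fin m) R)ˣ :=
  Sp φ ⊓ congrKer R m I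

end PaperESp

/-!
With `η = 1 ⊥ ε`, the relation `φ = ηᵀ φ* η` and its inverse `φ⁻¹ = η⁻¹ φ*⁻¹ η⁻ᵀ` give the
block identities `c = εᵀ c*`, `ν = εᵀ ν* ε`, `d = ε⁻¹ d*`, `μ = ε⁻¹ μ* ε⁻ᵀ`, from which
`η C_φ(v) η⁻¹ = C_{φ*}(ε v)` and `η R_φ(v) η⁻¹ = R_{φ*}(ε⁻ᵀ v)`. As `v ↦ ε v` and `v ↦ ε⁻ᵀ v`
are bijections of `R^{2n-1}` preserving `I^{2n-1}`, conjugation by `η` carries the generators of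
`ESp_φ(I)` and `ESp_φ(R)` onto those of `ESp_{φ*}(I)` and `ESp_{φ*}(R)`, hence `ESp_φ(R,I)` onto
`ESp_{φ*}(R,I)`.
-/

lemma Fin.sum_univ_eq_add_sum_pred {M : Type*} [AddCommMonoid M] {m : ℕ} (hm : 0 < m)
    (f : Fin m → M) :
    ∑ k, f k = f ⟨0, hm⟩ + ∑ k : Fin (m-1), f ⟨k.1+1, by have := k.2; omega⟩ := by
  obtain _ | m := m
  · omega
  · exact Fin.sum_univ_succ f

lemma Units.val_conj_eq_iff {M : Type*} [Monoid M] {u g : Mˣ} {X Y : M} (h : ↑u * X = Y * ↑u) :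
    (↑(u * g * u⁻¹) : M) = Y ↔ (g : M) = X := by
  rw [Units.val_mul, Units.mul_inv_eq_iff_eq_mul, Units.val_mul, ← h, Units.mul_right_inj]

lemma Subgroup.map_closure_conjugates {G G' : Type*} [Group G] [Group G'] (f : G →* G')
    (H K : Subgroup G) :
    (Subgroup.closure {g | ∃ e ∈ H, ∃ x ∈ K, g = e * x * e⁻¹}).map f =
      Subgroup.closure {g | ∃ e ∈ H.map f, ∃ x ∈ K.map f, g = e * x * e⁻¹} := by
  rw [MonoidHom.map_closure]
  congr 1
  ext g
  simp only [Set.mem_image, Set.mem_ofPred_eq, Subgroup.mem_map]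
  constructor
  · rintro ⟨_, ⟨e, he, x, hx, rfl⟩, rfl⟩
    exact ⟨f e, ⟨e, he, rfl⟩, f x, ⟨x, hx, rfl⟩, by simp⟩
  · rintro ⟨_, ⟨e, he, rfl⟩, _, ⟨x, hx, rfl⟩, rfl⟩
    exact ⟨e * x * e⁻¹, ⟨e, he, x, hx, rfl⟩, by simp⟩

lemma Set.image_eq_of_mem_iff {α β : Type*} {f : α → β} (hf : Function.Surjective f)
    {S : Set α} {T : Set β} (h : ∀ x, x ∈ S ↔ f x ∈ T) : f '' S = T := by
  rw [show S = f ⁻¹' T from Set.ext h, Set.image_preimage_eq T hf]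

open Matrix in
lemma Matrix.mulVec_mem_of_forall_mem {R m : Type*} [CommRing R] [Fintype m] {I : Ideal R}
    (A : Matrix m m R) {v : m → R} (hv : ∀ i, v i ∈ I) (i : m) : (A *ᵥ v) i ∈ I :=
  Ideal.sum_mem I fun k _ => I.mul_mem_left _ (hv k)

namespace PaperESp

open Matrix

section BlockMatrix

variable {R : Type*} {n : ℕ}

/-- The matrix `[[a, wᵀ], [v, D]]`. -/
def blockMat (a : R) (w v : Fin (2*n-1) → R) (D : Matrix (Fin (2*n-1)) (Fin (2*n-1)) R) :
    Matrix (Fin (2*n)) (Fin (2*n)) R :=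
  Matrix.of fun i j =>
    if hi : i.1 = 0 then (if hj : j.1 = 0 then a else w ⟨j.1-1, by have := j.2; omega⟩)
    else if hj : j.1 = 0 then v ⟨i.1-1, by have := i.2; omega⟩
    else D ⟨i.1-1, by have := i.2; omega⟩ ⟨j.1-1, by have := j.2; omega⟩

def topRow (M : Matrix (Fin (2*n)) (Fin (2*n)) R) : Fin (2*n-1) → R :=
  fun j => M ⟨0, by have := j.2; omega⟩ ⟨j.1+1, by have := j.2; omega⟩

lemma eq_blockMat (hn : 0 < 2*n) (M : Matrix (Fin (2*n)) (Fin (2*n)) R) :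
    M = blockMat (M ⟨0, hn⟩ ⟨0, hn⟩) (topRow M) (cvec M) (nuMat M) := by
  ext ⟨_ | i, hi⟩ ⟨_ | j, hj⟩ <;> rfl

lemma blockMat_mul [CommRing R] (a a' : R) (w v w' v' : Fin (2*n-1) → R)
    (D D' : Matrix (Fin (2*n-1)) (Fin (2*n-1)) R) :
    blockMat a w v D * blockMat a' w' v' D' =
      blockMat (a * a' + w ⬝ᵥ v') (a • w' + w ᵥ* D') (a' • v + D *ᵥ v')
        (vecMulVec v w' + D * D') := by
  ext ⟨i, hi⟩ ⟨j, hj⟩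
  rw [mul_apply, Fin.sum_univ_eq_add_sum_pred (show 0 < 2*n by omega)]
  cases i <;> cases j <;> simp [blockMat, dotProduct, vecMul, mulVec, vecMulVec_apply,
    mul_apply, mul_comm]

lemma transpose_blockMat (a : R) (w v : Fin (2*n-1) → R)
    (D : Matrix (Fin (2*n-1)) (Fin (2*n-1)) R) :
    (blockMat a w v D)ᵀ = blockMat a v w Dᵀ := by
  ext ⟨_ | i, hi⟩ ⟨_ | j, hj⟩ <;> rfl

lemma onePerp_eq_blockMat [CommRing R] (A : Matrix (Fin (2*n-1)) (Fin (2*n-1)) R) :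
    onePerp (n := n) A = blockMat 1 0 0 A := by
  ext ⟨_ | i, hi⟩ ⟨_ | j, hj⟩ <;> rfl

lemma Cmat_eq_blockMat [CommRing R] (φ : Matrix (Fin (2*n)) (Fin (2*n)) R)
    (v : Fin (2*n-1) → R) : Cmat φ v = blockMat 1 0 v (alphaMat φ v) := by
  ext ⟨_ | i, hi⟩ ⟨_ | j, hj⟩ <;> rfl

lemma Rmat_eq_blockMat [CommRing R] (φ : Matrix (Fin (2*n)) (Fin (2*n)) R)
    (v : Fin (2*n-1) → R) : Rmat φ v = blockMat 1 v 0 (betaMat φ v) := by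
  ext ⟨_ | i, hi⟩ ⟨_ | j, hj⟩ <;> rfl

end BlockMatrix

variable {R : Type*} [CommRing R]

section OnePerp

variable {n : ℕ}

lemma onePerp_mul_blockMat_mul_onePerp (A B : Matrix (Fin (2*n-1)) (Fin (2*n-1)) R) (a : R)
    (w v : Fin (2*n-1) → R) (D : Matrix (Fin (2*n-1)) (Fin (2*n-1)) R) :
    onePerp A * blockMat a w v D * onePerp B = blockMat a (w ᵥ* B) (A *ᵥ v) (A * D * B) := by
  simp [onePerp_eq_blockMat, blockMat_mul]

lemma transpose_onePerp (A : Matrix (Fin (2*n-1)) (Fin (2*n-1)) R) :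
    (onePerp (n := n) A)ᵀ = onePerp Aᵀ := by
  simp [onePerp_eq_blockMat, transpose_blockMat]

lemma onePerp_mul (A B : Matrix (Fin (2*n-1)) (Fin (2*n-1)) R) :
    onePerp (n := n) A * onePerp B = onePerp (A * B) := by
  simp [onePerp_eq_blockMat, blockMat_mul]

lemma onePerp_one : onePerp (n := n) (1 : Matrix (Fin (2*n-1)) (Fin (2*n-1)) R) = 1 := by
  ext ⟨_ | i, hi⟩ ⟨_ | j, hj⟩ <;> simp [onePerp, one_apply, Fin.ext_iff]

def onePerpHom : Matrix (Fin (2*n-1)) (Fin (2*n-1)) R →* Matrix (Fin (2*n)) (Fin (2*n)) R where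
  toFun := onePerp
  map_one' := onePerp_one
  map_mul' A B := (onePerp_mul A B).symm

lemma topRow_onePerp_mul_mul (A B : Matrix (Fin (2*n-1)) (Fin (2*n-1)) R)
    (M : Matrix (Fin (2*n)) (Fin (2*n)) R) :
    topRow (onePerp A * M * onePerp B) = topRow M ᵥ* B := by
  ext i
  rw [eq_blockMat (by have := i.2; omega) M, onePerp_mul_blockMat_mul_onePerp]
  rfl

lemma cvec_onePerp_mul_mul (A B : Matrix (Fin (2*n-1)) (Fin (2*n-1)) R)
    (M : Matrix (Fin (2*n)) (Fin (2*n)) R) :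
    cvec (onePerp A * M * onePerp B) = A *ᵥ cvec M := by
  ext i
  rw [eq_blockMat (by have := i.2; omega) M, onePerp_mul_blockMat_mul_onePerp]
  rfl

lemma nuMat_onePerp_mul_mul (A B : Matrix (Fin (2*n-1)) (Fin (2*n-1)) R)
    (M : Matrix (Fin (2*n)) (Fin (2*n)) R) :
    nuMat (onePerp A * M * onePerp B) = A * nuMat M * B := by
  ext i
  rw [eq_blockMat (by have := i.2; omega) M, onePerp_mul_blockMat_mul_onePerp]
  rfl

lemma inv_onePerp (ε : (Matrix (Fin (2*n-1)) (Fin (2*n-1)) R)ˣ) :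
    (onePerp (n := n) (ε : Matrix _ _ R))⁻¹ = onePerp (↑ε⁻¹ : Matrix _ _ R) :=
  inv_eq_right_inv <| by rw [onePerp_mul, ε.mul_inv, onePerp_one]

end OnePerp

section Conjugation

variable {n : ℕ}

lemma dvec_eq_topRow (φ : Matrix (Fin (2*n)) (Fin (2*n)) R) : dvec φ = topRow φ⁻¹ := rfl

lemma muMat_eq_nuMat (φ : Matrix (Fin (2*n)) (Fin (2*n)) R) : muMat φ = nuMat φ⁻¹ := rfl

lemma alphaMat_eq (φ : Matrix (Fin (2*n)) (Fin (2*n)) R) (v : Fin (2*n-1) → R) :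
    alphaMat φ v = 1 + vecMulVec (dvec φ) (v ᵥ* nuMat φ) := by
  ext i j
  simp [alphaMat, vecMulVec_apply, vecMul, dotProduct]

lemma betaMat_eq (φ : Matrix (Fin (2*n)) (Fin (2*n)) R) (v : Fin (2*n-1) → R) :
    betaMat φ v = 1 + vecMulVec (muMat φ *ᵥ v) (cvec φ) := by
  ext i j
  simp [betaMat, vecMulVec_apply, mulVec, dotProduct]

variable {φ ψ : Matrix (Fin (2*n)) (Fin (2*n)) R} {ε : (Matrix (Fin (2*n-1)) (Fin (2*n-1)) R)ˣ}

lemma inv_of_eq_transpose_mul_mul (hrel : φ = (onePerp (ε : Matrix _ _ R))ᵀ * ψ * onePerp ↑ε) :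
    φ⁻¹ = onePerp (↑ε⁻¹ : Matrix _ _ R) * ψ⁻¹ * onePerp (↑ε⁻¹ : Matrix _ _ R)ᵀ := by
  rw [hrel, Matrix.mul_inv_rev, Matrix.mul_inv_rev, ← transpose_nonsing_inv, inv_onePerp,
    transpose_onePerp, mul_assoc]

lemma mul_alphaMat_of_eq (hrel : φ = (onePerp (ε : Matrix _ _ R))ᵀ * ψ * onePerp ↑ε)
    (v : Fin (2*n-1) → R) :
    ε * alphaMat φ v = alphaMat ψ ((ε : Matrix _ _ R) *ᵥ v) * ε := by
  have hd : dvec φ = (↑ε⁻¹ : Matrix _ _ R) *ᵥ dvec ψ := by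
    rw [← vecMul_transpose, dvec_eq_topRow, dvec_eq_topRow, inv_of_eq_transpose_mul_mul hrel,
      topRow_onePerp_mul_mul]
  have hν : nuMat φ = (ε : Matrix _ _ R)ᵀ * nuMat ψ * (ε : Matrix _ _ R) := by
    rw [hrel, transpose_onePerp, nuMat_onePerp_mul_mul]
  rw [alphaMat_eq, alphaMat_eq, hd, hν, mul_add, add_mul, mul_one, one_mul, mul_vecMulVec,
    vecMulVec_mul, mulVec_mulVec, ε.mul_inv, one_mulVec]
  simp [vecMul_vecMul, ← vecMul_transpose, mul_assoc]

lemma mul_betaMat_of_eq (hrel : φ = (onePerp (ε : Matrix _ _ R))ᵀ * ψ * onePerp ↑ε)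
    (v : Fin (2*n-1) → R) :
    ε * betaMat φ v = betaMat ψ ((↑ε⁻¹ : Matrix _ _ R)ᵀ *ᵥ v) * ε := by
  have hc : cvec φ = (ε : Matrix _ _ R)ᵀ *ᵥ cvec ψ := by
    rw [hrel, transpose_onePerp, cvec_onePerp_mul_mul]
  have hμ : muMat φ = (↑ε⁻¹ : Matrix _ _ R) * muMat ψ * (↑ε⁻¹ : Matrix _ _ R)ᵀ := by
    rw [muMat_eq_nuMat, muMat_eq_nuMat, inv_of_eq_transpose_mul_mul hrel, nuMat_onePerp_mul_mul]
  rw [betaMat_eq, betaMat_eq, hc, hμ, mul_add, add_mul, mul_one, one_mul, mul_vecMulVec,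
    vecMulVec_mul, mulVec_transpose]
  simp [mulVec_mulVec, ← mul_assoc]

lemma onePerp_mul_Cmat_of_eq (hrel : φ = (onePerp (ε : Matrix _ _ R))ᵀ * ψ * onePerp ↑ε)
    (v : Fin (2*n-1) → R) :
    onePerp ↑ε * Cmat φ v = Cmat ψ ((ε : Matrix _ _ R) *ᵥ v) * onePerp ↑ε := by
  rw [Cmat_eq_blockMat, Cmat_eq_blockMat, onePerp_eq_blockMat, blockMat_mul, blockMat_mul,
    mul_alphaMat_of_eq hrel]
  simp

lemma onePerp_mul_Rmat_of_eq (hrel : φ = (onePerp (ε : Matrix _ _ R))ᵀ * ψ * onePerp ↑ε)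
    (v : Fin (2*n-1) → R) :
    onePerp ↑ε * Rmat φ v = Rmat ψ ((↑ε⁻¹ : Matrix _ _ R)ᵀ *ᵥ v) * onePerp ↑ε := by
  rw [Rmat_eq_blockMat, Rmat_eq_blockMat, onePerp_eq_blockMat, blockMat_mul, blockMat_mul,
    mul_betaMat_of_eq hrel]
  simp [mulVec_transpose, vecMul_vecMul]

end Conjugation

section Elementary

variable {n : ℕ}

lemma Esp_eq_EspIdeal_top (φ : Matrix (Fin (2*n)) (Fin (2*n)) R) : Esp φ = EspIdeal φ ⊤ := by
  simp [Esp, EspIdeal]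

variable {φ ψ : Matrix (Fin (2*n)) (Fin (2*n)) R} (u : (Matrix (Fin (2*n)) (Fin (2*n)) R)ˣ)
  {A B : Matrix (Fin (2*n-1)) (Fin (2*n-1)) R}

lemma map_conj_EspIdeal (hA : IsUnit A) (hB : IsUnit B)
    (hC : ∀ v, (u : Matrix _ _ R) * Cmat φ v = Cmat ψ (A *ᵥ v) * (u : Matrix _ _ R))
    (hR : ∀ v, (u : Matrix _ _ R) * Rmat φ v = Rmat ψ (B *ᵥ v) * (u : Matrix _ _ R))
    (I : Ideal R) :
    (EspIdeal φ I).map (MulAut.conj u).toMonoidHom = EspIdeal ψ I := by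
  obtain ⟨A, rfl⟩ := hA
  obtain ⟨B, rfl⟩ := hB
  rw [EspIdeal, EspIdeal, MonoidHom.map_closure]
  congr 1
  refine Set.image_eq_of_mem_iff (MulAut.conj u).surjective fun g => ?_
  simp only [Set.mem_ofPred_eq, MulAut.conj_apply]
  constructor
  · rintro ⟨v, hv, hg | hg⟩
    · exact ⟨_, mulVec_mem_of_forall_mem _ hv, .inl ((Units.val_conj_eq_iff (hC v)).2 hg)⟩
    · exact ⟨_, mulVec_mem_of_forall_mem _ hv, .inr ((Units.val_conj_eq_iff (hR v)).2 hg)⟩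
  · rintro ⟨w, hw, hg | hg⟩
    · have hC' := hC ((↑A⁻¹ : Matrix _ _ R) *ᵥ w)
      rw [mulVec_mulVec, A.mul_inv, one_mulVec] at hC'
      exact ⟨_, mulVec_mem_of_forall_mem _ hw, .inl ((Units.val_conj_eq_iff hC').1 hg)⟩
    · have hR' := hR ((↑B⁻¹ : Matrix _ _ R) *ᵥ w)
      rw [mulVec_mulVec, B.mul_inv, one_mulVec] at hR'
      exact ⟨_, mulVec_mem_of_forall_mem _ hw, .inr ((Units.val_conj_eq_iff hR').1 hg)⟩

lemma map_conj_REsp (hA : IsUnit A) (hB : IsUnit B)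
    (hC : ∀ v, (u : Matrix _ _ R) * Cmat φ v = Cmat ψ (A *ᵥ v) * (u : Matrix _ _ R))
    (hR : ∀ v, (u : Matrix _ _ R) * Rmat φ v = Rmat ψ (B *ᵥ v) * (u : Matrix _ _ R))
    (I : Ideal R) :
    (REsp φ I).map (MulAut.conj u).toMonoidHom = REsp ψ I := by
  rw [REsp, REsp, Subgroup.map_closure_conjugates, Esp_eq_EspIdeal_top, Esp_eq_EspIdeal_top,
    map_conj_EspIdeal u hA hB hC hR, map_conj_EspIdeal u hA hB hC hR]

end Elementary

theorem resp_conjugation_general {R : Type*} [CommRing R] (n : ℕ) (I : Ideal R)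
    (φ φstar : Matrix (Fin (2*n)) (Fin (2*n)) R)
    (ε : (Matrix (Fin (2*n-1)) (Fin (2*n-1)) R)ˣ)
    (hrel : φ = (onePerp (n := n) (ε : Matrix (Fin (2*n-1)) (Fin (2*n-1)) R))ᵀ * φstar *
        onePerp (n := n) (ε : Matrix (Fin (2*n-1)) (Fin (2*n-1)) R)) :
    ∀ g : (Matrix (Fin (2*n)) (Fin (2*n)) R)ˣ, g ∈ REsp φ I ↔
      ∃ h ∈ REsp φstar I, (g : Matrix (Fin (2*n)) (Fin (2*n)) R) =
        onePerp (n := n) ((ε⁻¹ : (Matrix (Fin (2*n-1)) (Fin (2*n-1)) R)ˣ) :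
            Matrix (Fin (2*n-1)) (Fin (2*n-1)) R) *
          (h : Matrix (Fin (2*n)) (Fin (2*n)) R) *
          onePerp (n := n) (ε : Matrix (Fin (2*n-1)) (Fin (2*n-1)) R) := by
  intro g
  set η := Units.map onePerpHom ε
  have hmap : (REsp φ I).map (MulAut.conj η).toMonoidHom = REsp φstar I :=
    map_conj_REsp η ε.isUnit ((isUnit_transpose _).mpr ε⁻¹.isUnit)
      (onePerp_mul_Cmat_of_eq hrel) (onePerp_mul_Rmat_of_eq hrel) I
  rw [← hmap]
  constructor
  · intro hg
    exact ⟨η * g * η⁻¹, Subgroup.mem_map_of_mem _ hg,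
      congrArg Units.val (by group : g = η⁻¹ * (η * g * η⁻¹) * η)⟩
  · rintro ⟨_, ⟨g', hg', rfl⟩, hgg'⟩
    obtain rfl : g = g' := (Units.ext hgg' : g = η⁻¹ * (η * g' * η⁻¹) * η).trans (by group)
    exact hg'

/-- if `φ = (1 ⊥ ε)ᵀ φ* (1 ⊥ ε)` with `ε ∈ E_{2n-1}(R,I)`, then
`ESp_φ(R,I) = (1 ⊥ ε)⁻¹ ESp_{φ*}(R,I) (1 ⊥ ε)`. -/
theorem resp_conjugation {R : Type*} [CommRing R] (n : ℕ) (I : Ideal R)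
    (φ φstar : Matrix (Fin (2*n)) (Fin (2*n)) R)
    (hskew : φᵀ = -φ) (hinv : IsUnit φ)
    (hskewstar : φstarᵀ = -φstar) (hinvstar : IsUnit φstar)
    (ε : (Matrix (Fin (2*n-1)) (Fin (2*n-1)) R)ˣ) (hε : ε ∈ REgrp R (2*n-1) I)
    (hrel : φ = (onePerp (n := n) (ε : Matrix (Fin (2*n-1)) (Fin (2*n-1)) R))ᵀ * φstar *
        onePerp (n := n) (ε : Matrix (Fin (2*n-1)) (Fin (2*n-1)) R)) :
    ∀ g : (Matrix (Fin (2*n)) (Fin (2*n)) R)ˣ, g ∈ REsp φ I ↔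
      ∃ h ∈ REsp φstar I, (g : Matrix (Fin (2*n)) (Fin (2*n)) R) =
        onePerp (n := n) ((ε⁻¹ : (Matrix (Fin (2*n-1)) (Fin (2*n-1)) R)ˣ) :
            Matrix (Fin (2*n-1)) (Fin (2*n-1)) R) *
          (h : Matrix (Fin (2*n)) (Fin (2*n)) R) *
          onePerp (n := n) (ε : Matrix (Fin (2*n-1)) (Fin (2*n-1)) R) :=
  resp_conjugation_general n I φ φstar ε hrel

end PaperESp
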